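/- arXiv:2110.02355 — 2 statements merged into one kernel-verified Lean document; each statement's English description precedes it below -/
import Mathlib

section
/- (Total-variation instance-independent bound.) If $\widehat{\mathcal{M}}$ is an $(\varepsilon, \delta)$-approximation of the finite MDP $\mathcal{M}$ where the transition approximation is measured in total variation distance ($d_{TV}(P(\cdot|s,a), \widehat P(\cdot|s,a)) \le \delta$ for all $s,a$), then any optimal strategy $\hat\pi$ of $\widehat{\mathcal{M}}$ is $\alpha$-optimal for $\mathcal{M}$ with $\alpha \le 2(\varepsilon + \gamma\delta\,\mathrm{Span}(\hat r)/(1-\gamma))$. -/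
private lemma aux_sup_sub {A : Type*} [Fintype A] [Nonempty A] (f g : A → ℝ) (c : ℝ)
    (h : ∀ a, |f a - g a| ≤ c) : |(⨆ a, f a) - ⨆ a, g a| ≤ c := by
  rw [abs_le]
  constructor
  · have hgle : (⨆ a, g a) ≤ (⨆ a, f a) + c := by
      apply ciSup_le
      intro a
      have h1 := (abs_le.mp (h a)).1
      have h2 := le_ciSup (Set.Finite.bddAbove (Set.finite_range f)) a
      linarith
    linarith
  · have hfle : (⨆ a, f a) ≤ (⨆ a, g a) + c := by
      apply ciSup_le
      intro a
      have h1 := (abs_le.mp (h a)).2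
      have h2 := le_ciSup (Set.Finite.bddAbove (Set.finite_range g)) a
      linarith
    linarith

private lemma aux_weight {A : Type*} [Fintype A] (π h1 h2 : A → ℝ) (c : ℝ)
    (hπ0 : ∀ a, 0 ≤ π a) (hπ1 : ∑ a, π a = 1)
    (h : ∀ a, |h1 a - h2 a| ≤ c) :
    |∑ a, π a * h1 a - ∑ a, π a * h2 a| ≤ c := by
  have key : ∑ a, π a * h1 a - ∑ a, π a * h2 a = ∑ a, π a * (h1 a - h2 a) := by
    rw [← Finset.sum_sub_distrib]
    exact Finset.sum_congr rfl fun a _ => by ring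
  rw [key]
  calc |∑ a, π a * (h1 a - h2 a)| ≤ ∑ a, |π a * (h1 a - h2 a)| :=
        Finset.abs_sum_le_sum_abs _ _
    _ ≤ ∑ a, π a * c := by
        apply Finset.sum_le_sum
        intro a _
        rw [abs_mul, abs_of_nonneg (hπ0 a)]
        exact mul_le_mul_of_nonneg_left (h a) (hπ0 a)
    _ = c := by rw [← Finset.sum_mul, hπ1, one_mul]

private lemma aux_tv {S : Type*} [Fintype S] [Nonempty S] (p q f : S → ℝ) (m M d : ℝ)
    (hm : ∀ s, m ≤ f s) (hM : ∀ s, f s ≤ M)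
    (hp1 : ∑ s, p s = 1) (hq1 : ∑ s, q s = 1)
    (hd : (1 / 2) * ∑ s, |p s - q s| ≤ d) :
    |∑ s, p s * f s - ∑ s, q s * f s| ≤ d * (M - m) := by
  have hMm : m ≤ M := le_trans (hm (Classical.arbitrary S)) (hM (Classical.arbitrary S))
  have key : ∑ s, p s * f s - ∑ s, q s * f s
      = ∑ s, (p s - q s) * (f s - (M + m) / 2) := by
    have h1 : ∑ s, (p s - q s) * (f s - (M + m) / 2)
        = (∑ s, (p s - q s) * f s) - (∑ s, (p s - q s)) * ((M + m) / 2) := by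
      rw [Finset.sum_mul, ← Finset.sum_sub_distrib]
      exact Finset.sum_congr rfl fun s _ => by ring
    rw [h1]
    have h2 : ∑ s, (p s - q s) = 0 := by
      rw [Finset.sum_sub_distrib, hp1, hq1]; ring
    have h3 : ∑ s, (p s - q s) * f s = ∑ s, p s * f s - ∑ s, q s * f s := by
      rw [← Finset.sum_sub_distrib]
      exact Finset.sum_congr rfl fun s _ => by ring
    rw [h2, h3]; ring
  rw [key]
  calc |∑ s, (p s - q s) * (f s - (M + m) / 2)|
      ≤ ∑ s, |(p s - q s) * (f s - (M + m) / 2)| := Finset.abs_sum_le_sum_abs _ _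
    _ ≤ ∑ s, |p s - q s| * ((M - m) / 2) := by
        apply Finset.sum_le_sum
        intro s _
        rw [abs_mul]
        apply mul_le_mul_of_nonneg_left _ (abs_nonneg _)
        rw [abs_le]
        constructor <;> [nlinarith [hm s]; nlinarith [hM s]]
    _ = (∑ s, |p s - q s|) * ((M - m) / 2) := by rw [← Finset.sum_mul]
    _ ≤ (2 * d) * ((M - m) / 2) := by
        apply mul_le_mul_of_nonneg_right _ (by linarith)
        linarith
    _ = d * (M - m) := by ring

/-- **Total-variation instance-independent robustness bound for MDPs.** -/
theorem stmt8 {S A : Type*} [Fintype S] [Fintype A] [Nonempty S] [Nonempty A]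
    (γ : ℝ) (hγ0 : 0 < γ) (hγ1 : γ < 1)
    (P Phat : S → A → S → ℝ)
    (hP0 : ∀ s a s', 0 ≤ P s a s') (hP1 : ∀ s a, ∑ s', P s a s' = 1)
    (hPhat0 : ∀ s a s', 0 ≤ Phat s a s') (hPhat1 : ∀ s a, ∑ s', Phat s a s' = 1)
    (r rhat : S → A → ℝ)
    (ε δ : ℝ) (hε0 : 0 ≤ ε) (hδ0 : 0 ≤ δ)
    (hε : ∀ s a, |r s a - rhat s a| ≤ ε)
    -- transition approximation in total variation distance
    (hδ : ∀ s a, (1 / 2) * ∑ s', |P s a s' - Phat s a s'| ≤ δ)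
    -- `π̂` : an optimal strategy of `M̂`, with value function `V̂_π̂`
    (πhat : S → A → ℝ)
    (hπ0 : ∀ s a, 0 ≤ πhat s a) (hπ1 : ∀ s, ∑ a, πhat s a = 1)
    (Vhatπ : S → ℝ)
    (hVhatπ : ∀ s, Vhatπ s =
      ∑ a, πhat s a * ((1 - γ) * rhat s a + γ * ∑ s', Phat s a s' * Vhatπ s'))
    (hVhatopt : ∀ s, Vhatπ s =
      ⨆ a, ((1 - γ) * rhat s a + γ * ∑ s', Phat s a s' * Vhatπ s'))
    -- `V*` : optimal value of `M`; `Vπ` : value of `π̂` in `M`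
    (Vstar : S → ℝ)
    (hVstar : ∀ s, Vstar s = ⨆ a, ((1 - γ) * r s a + γ * ∑ s', P s a s' * Vstar s'))
    (Vπ : S → ℝ)
    (hVπ : ∀ s, Vπ s =
      ∑ a, πhat s a * ((1 - γ) * r s a + γ * ∑ s', P s a s' * Vπ s')) :
    ∀ s, Vπ s ≥ Vstar s -
      2 * (ε + γ * δ * ((⨆ p : S × A, rhat p.1 p.2) - ⨅ p : S × A, rhat p.1 p.2)
        / (1 - γ)) := by
  have h1γ : (0:ℝ) < 1 - γ := by linarith
  set Rmax := ⨆ p : S × A, rhat p.1 p.2 with hRmax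
  set Rmin := ⨅ p : S × A, rhat p.1 p.2 with hRmin
  have hRub : ∀ s a, rhat s a ≤ Rmax := fun s a =>
    le_ciSup (f := fun p : S × A => rhat p.1 p.2)
      (Set.Finite.bddAbove (Set.finite_range _)) (⟨s, a⟩ : S × A)
  have hRlb : ∀ s a, Rmin ≤ rhat s a := fun s a =>
    ciInf_le (f := fun p : S × A => rhat p.1 p.2)
      (Set.Finite.bddBelow (Set.finite_range _)) (⟨s, a⟩ : S × A)
  -- Step 1: bounds on Vhatπ
  have hVub : ∀ s, Vhatπ s ≤ Rmax := by
    obtain ⟨s0, hs0⟩ := Finite.exists_max Vhatπ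
    have hs0le : Vhatπ s0 ≤ Rmax := by
      have hkey : Vhatπ s0 ≤ (1 - γ) * Rmax + γ * Vhatπ s0 := by
        conv_lhs => rw [hVhatopt s0]
        apply ciSup_le
        intro a
        have h1 : (1 - γ) * rhat s0 a ≤ (1 - γ) * Rmax :=
          mul_le_mul_of_nonneg_left (hRub s0 a) (le_of_lt h1γ)
        have h2 : ∑ s', Phat s0 a s' * Vhatπ s' ≤ Vhatπ s0 := by
          calc ∑ s', Phat s0 a s' * Vhatπ s' ≤ ∑ s', Phat s0 a s' * Vhatπ s0 :=
                Finset.sum_le_sum fun s' _ =>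
                  mul_le_mul_of_nonneg_left (hs0 s') (hPhat0 s0 a s')
            _ = Vhatπ s0 := by rw [← Finset.sum_mul, hPhat1, one_mul]
        nlinarith [mul_le_mul_of_nonneg_left h2 (le_of_lt hγ0)]
      nlinarith
    exact fun s => le_trans (hs0 s) hs0le
  have hVlb : ∀ s, Rmin ≤ Vhatπ s := by
    obtain ⟨s0, hs0⟩ := Finite.exists_min Vhatπ
    have hs0le : Rmin ≤ Vhatπ s0 := by
      have hkey : (1 - γ) * Rmin + γ * Vhatπ s0 ≤ Vhatπ s0 := by
        conv_rhs => rw [hVhatπ s0]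
        have : ∀ a ∈ Finset.univ, πhat s0 a * ((1 - γ) * Rmin + γ * Vhatπ s0)
            ≤ πhat s0 a * ((1 - γ) * rhat s0 a + γ * ∑ s', Phat s0 a s' * Vhatπ s') := by
          intro a _
          apply mul_le_mul_of_nonneg_left _ (hπ0 s0 a)
          have h1 : (1 - γ) * Rmin ≤ (1 - γ) * rhat s0 a :=
            mul_le_mul_of_nonneg_left (hRlb s0 a) (le_of_lt h1γ)
          have h2 : Vhatπ s0 ≤ ∑ s', Phat s0 a s' * Vhatπ s' := by
            calc Vhatπ s0 = ∑ s', Phat s0 a s' * Vhatπ s0 := by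
                  rw [← Finset.sum_mul, hPhat1, one_mul]
              _ ≤ ∑ s', Phat s0 a s' * Vhatπ s' :=
                  Finset.sum_le_sum fun s' _ =>
                    mul_le_mul_of_nonneg_left (hs0 s') (hPhat0 s0 a s')
          nlinarith [mul_le_mul_of_nonneg_left h2 (le_of_lt hγ0)]
        calc (1 - γ) * Rmin + γ * Vhatπ s0
            = ∑ a, πhat s0 a * ((1 - γ) * Rmin + γ * Vhatπ s0) := by
              rw [← Finset.sum_mul, hπ1, one_mul]
          _ ≤ _ := Finset.sum_le_sum this
      nlinarith
    exact fun s => le_trans hs0le (hs0 s)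
  set D := Rmax - Rmin with hD
  have hD0 : 0 ≤ D := by
    have := hRlb (Classical.arbitrary S) (Classical.arbitrary A)
    have := hRub (Classical.arbitrary S) (Classical.arbitrary A)
    simp only [hD]; linarith
  -- TV bound specialized
  have htv : ∀ s a, |∑ s', P s a s' * Vhatπ s' - ∑ s', Phat s a s' * Vhatπ s'| ≤ δ * D :=
    fun s a => aux_tv (P s a) (Phat s a) Vhatπ Rmin Rmax δ hVlb hVub (hP1 s a)
      (hPhat1 s a) (hδ s a)
  -- Step 2 : ‖Vhatπ - Vstar‖∞ bound
  obtain ⟨s1, hs1⟩ := Finite.exists_max (fun s => |Vhatπ s - Vstar s|)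
  set E1 := |Vhatπ s1 - Vstar s1| with hE1def
  have hE1 : ∀ s, |Vhatπ s - Vstar s| ≤ E1 := hs1
  have hE1rec : E1 ≤ (1 - γ) * ε + γ * (δ * D + E1) := by
    show |Vhatπ s1 - Vstar s1| ≤ _
    rw [hVhatopt s1, hVstar s1]
    apply aux_sup_sub
    intro a
    have hr : |rhat s1 a - r s1 a| ≤ ε := by rw [abs_sub_comm]; exact hε s1 a
    have hsum : |∑ s', Phat s1 a s' * Vhatπ s' - ∑ s', P s1 a s' * Vstar s'| ≤ δ * D + E1 := by
      have h1 := htv s1 a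
      have h2 : |∑ s', P s1 a s' * Vhatπ s' - ∑ s', P s1 a s' * Vstar s'| ≤ E1 :=
        aux_weight (P s1 a) Vhatπ Vstar E1 (hP0 s1 a) (hP1 s1 a) hE1
      calc |∑ s', Phat s1 a s' * Vhatπ s' - ∑ s', P s1 a s' * Vstar s'|
          ≤ |∑ s', Phat s1 a s' * Vhatπ s' - ∑ s', P s1 a s' * Vhatπ s'|
            + |∑ s', P s1 a s' * Vhatπ s' - ∑ s', P s1 a s' * Vstar s'| := by
            have := abs_sub_le (∑ s', Phat s1 a s' * Vhatπ s')
              (∑ s', P s1 a s' * Vhatπ s') (∑ s', P s1 a s' * Vstar s')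
            exact this
        _ ≤ δ * D + E1 := by
            rw [abs_sub_comm] at h1
            linarith
    calc |((1 - γ) * rhat s1 a + γ * ∑ s', Phat s1 a s' * Vhatπ s')
          - ((1 - γ) * r s1 a + γ * ∑ s', P s1 a s' * Vstar s')|
        = |(1 - γ) * (rhat s1 a - r s1 a)
            + γ * (∑ s', Phat s1 a s' * Vhatπ s' - ∑ s', P s1 a s' * Vstar s')| := by
          ring_nf
      _ ≤ |(1 - γ) * (rhat s1 a - r s1 a)|
            + |γ * (∑ s', Phat s1 a s' * Vhatπ s' - ∑ s', P s1 a s' * Vstar s')| :=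
          abs_add_le _ _
      _ ≤ (1 - γ) * ε + γ * (δ * D + E1) := by
          rw [abs_mul, abs_mul, abs_of_nonneg (le_of_lt h1γ), abs_of_nonneg (le_of_lt hγ0)]
          have := mul_le_mul_of_nonneg_left hr (le_of_lt h1γ)
          have := mul_le_mul_of_nonneg_left hsum (le_of_lt hγ0)
          linarith
  have hE1bound : E1 ≤ ε + γ * δ * D / (1 - γ) := by
    have h' : (1 - γ) * E1 ≤ (1 - γ) * ε + γ * δ * D := by nlinarith [hE1rec]
    have h'' : E1 - ε ≤ γ * δ * D / (1 - γ) :=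
      (le_div_iff₀ h1γ).mpr (by nlinarith [h'])
    linarith
  -- Step 3 : ‖Vπ - Vhatπ‖∞ bound
  obtain ⟨s2, hs2⟩ := Finite.exists_max (fun s => |Vπ s - Vhatπ s|)
  set E2 := |Vπ s2 - Vhatπ s2| with hE2def
  have hE2 : ∀ s, |Vπ s - Vhatπ s| ≤ E2 := hs2
  have hE2rec : E2 ≤ (1 - γ) * ε + γ * (δ * D + E2) := by
    show |Vπ s2 - Vhatπ s2| ≤ _
    rw [hVπ s2, hVhatπ s2]
    apply aux_weight _ _ _ _ (hπ0 s2) (hπ1 s2)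
    intro a
    have hr : |r s2 a - rhat s2 a| ≤ ε := hε s2 a
    have hsum : |∑ s', P s2 a s' * Vπ s' - ∑ s', Phat s2 a s' * Vhatπ s'| ≤ δ * D + E2 := by
      have h1 := htv s2 a
      have h2 : |∑ s', P s2 a s' * Vπ s' - ∑ s', P s2 a s' * Vhatπ s'| ≤ E2 :=
        aux_weight (P s2 a) Vπ Vhatπ E2 (hP0 s2 a) (hP1 s2 a) hE2
      calc |∑ s', P s2 a s' * Vπ s' - ∑ s', Phat s2 a s' * Vhatπ s'|
          ≤ |∑ s', P s2 a s' * Vπ s' - ∑ s', P s2 a s' * Vhatπ s'|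
            + |∑ s', P s2 a s' * Vhatπ s' - ∑ s', Phat s2 a s' * Vhatπ s'| :=
            abs_sub_le _ _ _
        _ ≤ δ * D + E2 := by linarith
    calc |((1 - γ) * r s2 a + γ * ∑ s', P s2 a s' * Vπ s')
          - ((1 - γ) * rhat s2 a + γ * ∑ s', Phat s2 a s' * Vhatπ s')|
        = |(1 - γ) * (r s2 a - rhat s2 a)
            + γ * (∑ s', P s2 a s' * Vπ s' - ∑ s', Phat s2 a s' * Vhatπ s')| := by
          ring_nf
      _ ≤ |(1 - γ) * (r s2 a - rhat s2 a)|
            + |γ * (∑ s', P s2 a s' * Vπ s' - ∑ s', Phat s2 a s' * Vhatπ s')| :=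
          abs_add_le _ _
      _ ≤ (1 - γ) * ε + γ * (δ * D + E2) := by
          rw [abs_mul, abs_mul, abs_of_nonneg (le_of_lt h1γ), abs_of_nonneg (le_of_lt hγ0)]
          have := mul_le_mul_of_nonneg_left hr (le_of_lt h1γ)
          have := mul_le_mul_of_nonneg_left hsum (le_of_lt hγ0)
          linarith
  have hE2bound : E2 ≤ ε + γ * δ * D / (1 - γ) := by
    have h' : (1 - γ) * E2 ≤ (1 - γ) * ε + γ * δ * D := by nlinarith [hE2rec]
    have h'' : E2 - ε ≤ γ * δ * D / (1 - γ) :=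
      (le_div_iff₀ h1γ).mpr (by nlinarith [h'])
    linarith
  -- conclusion
  intro s
  have h1 := (abs_le.mp (hE1 s)).1
  have h2 := (abs_le.mp (hE2 s)).1
  simp only [ge_iff_le]
  have : Vstar s - Vπ s ≤ E1 + E2 := by linarith
  linarith
end

section
/- (Wasserstein instance-independent bound.) If $\widehat{\mathcal{M}}$ is an $(\varepsilon,\delta)$-approximation of the finite MDP $\mathcal{M}$ with transition approximation measured in Wasserstein distance, and $\widehat{\mathcal{M}}$ is $(L_r, L_P)$-Lipschitz with $\gamma L_P < 1$, then any optimal strategy $\hat\pi$ of $\widehat{\mathcal{M}}$ is $\alpha$-optimal for $\mathcal{M}$ with $\alpha \le 2(\varepsilon + \gamma\delta L_r(1-\gamma)/((1-\gamma)(1-\gamma L_P))) = 2(\varepsilon + \gamma \delta L_r/(1-\gamma L_P))$. -/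
/-- Wasserstein-1 distance between two probability mass functions on a finite metric
space, as the IPM over 1-Lipschitz functions. -/
noncomputable def W1 {S : Type*} [Fintype S] [MetricSpace S] (μ ν : S → ℝ) : ℝ :=
  sSup {d : ℝ | ∃ f : S → ℝ, LipschitzWith 1 f ∧
    d = |∑ s, f s * μ s - ∑ s, f s * ν s|}


section aux
variable {S : Type*} [Fintype S] [Nonempty S] [MetricSpace S]

lemma W1_bddAbove (μ ν : S → ℝ) (h : ∑ s, μ s = ∑ s, ν s) :
    BddAbove {d : ℝ | ∃ f : S → ℝ, LipschitzWith 1 f ∧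
      d = |∑ s, f s * μ s - ∑ s, f s * ν s|} := by
  classical
  obtain ⟨s₀⟩ := (inferInstance : Nonempty S)
  refine ⟨∑ s, dist s s₀ * |μ s - ν s|, ?_⟩
  rintro d ⟨f, hf, rfl⟩
  have key : ∑ s, f s * μ s - ∑ s, f s * ν s
      = ∑ s, (f s - f s₀) * (μ s - ν s) := by
    have e : ∀ s ∈ Finset.univ, (f s - f s₀) * (μ s - ν s)
        = (f s * μ s - f s * ν s) - (f s₀ * μ s - f s₀ * ν s) := by
      intro s _; ring
    rw [Finset.sum_congr rfl e, Finset.sum_sub_distrib, Finset.sum_sub_distrib,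
      Finset.sum_sub_distrib, ← Finset.mul_sum, ← Finset.mul_sum, h]
    ring
  rw [key]
  calc |∑ s, (f s - f s₀) * (μ s - ν s)|
      ≤ ∑ s, |(f s - f s₀) * (μ s - ν s)| := Finset.abs_sum_le_sum_abs _ _
    _ ≤ ∑ s, dist s s₀ * |μ s - ν s| := by
        apply Finset.sum_le_sum
        intro s _
        rw [abs_mul]
        apply mul_le_mul_of_nonneg_right _ (abs_nonneg _)
        have := hf.dist_le_mul s s₀
        rwa [Real.dist_eq, NNReal.coe_one, one_mul] at this

lemma abs_sum_sub_le_W1 (μ ν : S → ℝ) (h : ∑ s, μ s = ∑ s, ν s)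
    (K : ℝ) (hK : 0 ≤ K) (V : S → ℝ) (hV : ∀ x y, |V x - V y| ≤ K * dist x y) :
    |∑ s, V s * μ s - ∑ s, V s * ν s| ≤ K * W1 μ ν := by
  rcases eq_or_lt_of_le hK with hK0 | hKpos
  · have hc : ∀ x y, V x = V y := by
      intro x y
      have := hV x y
      rw [← hK0, zero_mul] at this
      have h0 : |V x - V y| = 0 := le_antisymm this (abs_nonneg _)
      have := abs_eq_zero.mp h0
      linarith
    obtain ⟨s₀⟩ := (inferInstance : Nonempty S)
    have : ∑ s, V s * μ s - ∑ s, V s * ν s = V s₀ * (∑ s, μ s) - V s₀ * (∑ s, ν s) := by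
      rw [Finset.mul_sum, Finset.mul_sum]
      congr 1 <;> exact Finset.sum_congr rfl fun s _ => by rw [hc s s₀]
    rw [this, h, sub_self, abs_zero, ← hK0, zero_mul]
  · set g : S → ℝ := fun s => K⁻¹ * V s with hg
    have hglip : LipschitzWith 1 g := by
      apply LipschitzWith.of_dist_le_mul
      intro x y
      rw [NNReal.coe_one, one_mul, Real.dist_eq, hg]
      simp only
      rw [← mul_sub, abs_mul, abs_inv, abs_of_pos hKpos]
      rw [inv_mul_le_iff₀ hKpos]
      exact (hV x y).trans (le_of_eq (by ring))
    have hmem : |∑ s, g s * μ s - ∑ s, g s * ν s| ∈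
        {d : ℝ | ∃ f : S → ℝ, LipschitzWith 1 f ∧
          d = |∑ s, f s * μ s - ∑ s, f s * ν s|} := ⟨g, hglip, rfl⟩
    have hle : |∑ s, g s * μ s - ∑ s, g s * ν s| ≤ W1 μ ν :=
      le_csSup (W1_bddAbove μ ν h) hmem
    have hrw : ∑ s, V s * μ s - ∑ s, V s * ν s
        = K * (∑ s, g s * μ s - ∑ s, g s * ν s) := by
      rw [hg]
      simp only [Finset.mul_sum, mul_sub]
      congr 1 <;> exact Finset.sum_congr rfl fun s _ => by
        field_simp
    rw [hrw, abs_mul, abs_of_pos hKpos]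
    exact mul_le_mul_of_nonneg_left hle (le_of_lt hKpos)

/-- Difference of expectations bound. -/
lemma exp_diff_le (μ ν V W : S → ℝ) (hμ0 : ∀ s, 0 ≤ μ s) (hμ1 : ∑ s, μ s = 1)
    (hν1 : ∑ s, ν s = 1)
    (K : ℝ) (hK : 0 ≤ K) (hV : ∀ x y, |V x - V y| ≤ K * dist x y)
    (D : ℝ) (hD : ∀ s, |V s - W s| ≤ D) :
    |∑ s, ν s * V s - ∑ s, μ s * W s| ≤ K * W1 μ ν + D := by
  have split : ∑ s, ν s * V s - ∑ s, μ s * W s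
      = (∑ s, V s * ν s - ∑ s, V s * μ s) + ∑ s, μ s * (V s - W s) := by
    have : ∀ s ∈ Finset.univ, μ s * (V s - W s) = V s * μ s - μ s * W s := by
      intro s _; ring
    rw [Finset.sum_congr rfl this, Finset.sum_sub_distrib]
    have : ∀ s ∈ Finset.univ, ν s * V s = V s * ν s := by intro s _; ring
    rw [Finset.sum_congr rfl this]
    ring
  rw [split]
  have h1 : |∑ s, V s * ν s - ∑ s, V s * μ s| ≤ K * W1 μ ν := by
    rw [abs_sub_comm]
    exact abs_sum_sub_le_W1 μ ν (by rw [hμ1, hν1]) K hK V hV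
  have h2 : |∑ s, μ s * (V s - W s)| ≤ D := by
    calc |∑ s, μ s * (V s - W s)| ≤ ∑ s, |μ s * (V s - W s)| :=
          Finset.abs_sum_le_sum_abs _ _
      _ ≤ ∑ s, μ s * D := by
          apply Finset.sum_le_sum; intro s _
          rw [abs_mul, abs_of_nonneg (hμ0 s)]
          exact mul_le_mul_of_nonneg_left (hD s) (hμ0 s)
      _ = D := by rw [← Finset.sum_mul, hμ1, one_mul]
  calc |(∑ s, V s * ν s - ∑ s, V s * μ s) + ∑ s, μ s * (V s - W s)|
      ≤ |∑ s, V s * ν s - ∑ s, V s * μ s| + |∑ s, μ s * (V s - W s)| := abs_add_le _ _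
    _ ≤ K * W1 μ ν + D := add_le_add h1 h2

end aux

section supAux
variable {A : Type*} [Fintype A] [Nonempty A]

lemma ciSup_sub_ciSup_le (f g : A → ℝ) (c : ℝ) (h : ∀ a, f a - g a ≤ c) :
    (⨆ a, f a) - (⨆ a, g a) ≤ c := by
  obtain ⟨a, ha⟩ := Finite.exists_max f
  have h1 : (⨆ a, f a) = f a :=
    le_antisymm (ciSup_le ha) (le_ciSup (Set.finite_range f).bddAbove a)
  have h2 : g a ≤ ⨆ a, g a := le_ciSup (Set.finite_range g).bddAbove a
  rw [h1]
  linarith [h a]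

lemma abs_ciSup_sub_ciSup_le (f g : A → ℝ) (c : ℝ) (h : ∀ a, |f a - g a| ≤ c) :
    |(⨆ a, f a) - (⨆ a, g a)| ≤ c := by
  rw [abs_sub_le_iff]
  constructor
  · exact ciSup_sub_ciSup_le f g c fun a => (abs_sub_le_iff.mp (h a)).1
  · exact ciSup_sub_ciSup_le g f c fun a => (abs_sub_le_iff.mp (h a)).2

end supAux

/-- **Wasserstein instance-independent robustness bound for MDPs.** -/
theorem stmt10 {S A : Type*} [Fintype S] [Fintype A] [Nonempty S] [Nonempty A]
    [MetricSpace S]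
    (γ : ℝ) (hγ0 : 0 < γ) (hγ1 : γ < 1)
    (P Phat : S → A → S → ℝ)
    (hP0 : ∀ s a s', 0 ≤ P s a s') (hP1 : ∀ s a, ∑ s', P s a s' = 1)
    (hPhat0 : ∀ s a s', 0 ≤ Phat s a s') (hPhat1 : ∀ s a, ∑ s', Phat s a s' = 1)
    (r rhat : S → A → ℝ)
    (ε δ : ℝ) (hε0 : 0 ≤ ε) (hδ0 : 0 ≤ δ)
    (hε : ∀ s a, |r s a - rhat s a| ≤ ε)
    -- transition approximation in Wasserstein distance
    (hδ : ∀ s a, W1 (P s a) (Phat s a) ≤ δ)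
    -- `M̂` is `(L_r, L_P)`-Lipschitz with `γ L_P < 1`
    (Lr LP : ℝ) (hLr0 : 0 ≤ Lr) (hLP0 : 0 ≤ LP)
    (hLr : ∀ s₁ s₂ a, |rhat s₁ a - rhat s₂ a| ≤ Lr * dist s₁ s₂)
    (hLP : ∀ s₁ s₂ a, W1 (Phat s₁ a) (Phat s₂ a) ≤ LP * dist s₁ s₂)
    (hγLP : γ * LP < 1)
    -- `π̂` : an optimal strategy of `M̂`, with value function `V̂_π̂`
    (πhat : S → A → ℝ)
    (hπ0 : ∀ s a, 0 ≤ πhat s a) (hπ1 : ∀ s, ∑ a, πhat s a = 1)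
    (Vhatπ : S → ℝ)
    (hVhatπ : ∀ s, Vhatπ s =
      ∑ a, πhat s a * ((1 - γ) * rhat s a + γ * ∑ s', Phat s a s' * Vhatπ s'))
    (hVhatopt : ∀ s, Vhatπ s =
      ⨆ a, ((1 - γ) * rhat s a + γ * ∑ s', Phat s a s' * Vhatπ s'))
    -- `V*` : optimal value of `M`; `Vπ` : value of `π̂` in `M`
    (Vstar : S → ℝ)
    (hVstar : ∀ s, Vstar s = ⨆ a, ((1 - γ) * r s a + γ * ∑ s', P s a s' * Vstar s'))
    (Vπ : S → ℝ)
    (hVπ : ∀ s, Vπ s =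
      ∑ a, πhat s a * ((1 - γ) * r s a + γ * ∑ s', P s a s' * Vπ s')) :
    ∀ s, Vπ s ≥ Vstar s - 2 * (ε + γ * δ * Lr / (1 - γ * LP)) := by
  classical
  have h1γLP : 0 < 1 - γ * LP := by linarith
  have h1γ : 0 < 1 - γ := by linarith
  set LV : ℝ := (1 - γ) * Lr / (1 - γ * LP) with hLVdef
  have hLV0 : 0 ≤ LV := div_nonneg (mul_nonneg h1γ.le hLr0) h1γLP.le
  set J : ℝ := γ * δ * Lr / (1 - γ * LP) with hJdef
  -- Step 1: a Lipschitz constant K for Vhatπ with K ≤ LV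
  obtain ⟨K, hK0, hKlip, hKle⟩ :
      ∃ K : ℝ, 0 ≤ K ∧ (∀ x y, |Vhatπ x - Vhatπ y| ≤ K * dist x y) ∧ K ≤ LV := by
    by_cases hsub : ∀ x y : S, x = y
    · refine ⟨0, le_refl _, ?_, hLV0⟩
      intro x y
      rw [hsub x y, sub_self, abs_zero, zero_mul]
    · push_neg at hsub
      obtain ⟨x₀, y₀, hxy₀⟩ := hsub
      have hT : (Finset.univ.filter (fun p : S × S => p.1 ≠ p.2)).Nonempty :=
        ⟨(x₀, y₀), by simp [hxy₀]⟩
      obtain ⟨K, hKdef⟩ : ∃ K : ℝ, K = (Finset.univ.filter (fun p : S × S => p.1 ≠ p.2)).sup'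
          hT (fun p => |Vhatπ p.1 - Vhatπ p.2| / dist p.1 p.2) := ⟨_, rfl⟩
      have hKlip : ∀ x y, |Vhatπ x - Vhatπ y| ≤ K * dist x y := by
        intro x y
        by_cases hxy : x = y
        · rw [hxy, sub_self, abs_zero, dist_self, mul_zero]
        · have hmem : (x, y) ∈ Finset.univ.filter (fun p : S × S => p.1 ≠ p.2) := by
            simp [hxy]
          have hd : 0 < dist x y := dist_pos.mpr hxy
          have hle := Finset.le_sup' (f := fun p : S × S =>
            |Vhatπ p.1 - Vhatπ p.2| / dist p.1 p.2) hmem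
          rw [hKdef]
          exact (div_le_iff₀ hd).mp hle
      have hK0 : 0 ≤ K := by
        obtain ⟨q, hq⟩ := hT
        have hle := Finset.le_sup' (f := fun p : S × S =>
          |Vhatπ p.1 - Vhatπ p.2| / dist p.1 p.2) hq
        have h0 : (0:ℝ) ≤ |Vhatπ q.1 - Vhatπ q.2| / dist q.1 q.2 :=
          div_nonneg (abs_nonneg _) dist_nonneg
        rw [hKdef]
        exact h0.trans hle
      refine ⟨K, hK0, hKlip, ?_⟩
      -- contraction argument at a maximizing pair
      obtain ⟨p, hpmem, hpeq⟩ := Finset.exists_mem_eq_sup' hT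
        (fun p : S × S => |Vhatπ p.1 - Vhatπ p.2| / dist p.1 p.2)
      have hpne : p.1 ≠ p.2 := by
        rw [Finset.mem_filter] at hpmem; exact hpmem.2
      have hd : 0 < dist p.1 p.2 := dist_pos.mpr hpne
      have hKd : K * dist p.1 p.2 = |Vhatπ p.1 - Vhatπ p.2| := by
        rw [hKdef, hpeq, div_mul_cancel₀ _ (ne_of_gt hd)]
      -- per-action bound
      have hQ : ∀ a : A,
          |((1 - γ) * rhat p.1 a + γ * ∑ s', Phat p.1 a s' * Vhatπ s')
            - ((1 - γ) * rhat p.2 a + γ * ∑ s', Phat p.2 a s' * Vhatπ s')|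
          ≤ (1 - γ) * (Lr * dist p.1 p.2) + γ * (K * (LP * dist p.1 p.2)) := by
        intro a
        have e1 : ((1 - γ) * rhat p.1 a + γ * ∑ s', Phat p.1 a s' * Vhatπ s')
            - ((1 - γ) * rhat p.2 a + γ * ∑ s', Phat p.2 a s' * Vhatπ s')
            = (1 - γ) * (rhat p.1 a - rhat p.2 a)
              + γ * ((∑ s', Phat p.1 a s' * Vhatπ s') - ∑ s', Phat p.2 a s' * Vhatπ s') := by
          ring
        rw [e1]
        have hterm : |(∑ s', Phat p.1 a s' * Vhatπ s') - ∑ s', Phat p.2 a s' * Vhatπ s'|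
            ≤ K * (LP * dist p.1 p.2) := by
          have h := exp_diff_le (Phat p.2 a) (Phat p.1 a) Vhatπ Vhatπ (hPhat0 p.2 a)
            (hPhat1 p.2 a) (hPhat1 p.1 a) K hK0 hKlip 0
            (fun s => by rw [sub_self, abs_zero])
          rw [add_zero] at h
          refine h.trans ?_
          have hw := hLP p.2 p.1 a
          rw [dist_comm p.2 p.1] at hw
          exact mul_le_mul_of_nonneg_left hw hK0
        calc |(1 - γ) * (rhat p.1 a - rhat p.2 a)
              + γ * ((∑ s', Phat p.1 a s' * Vhatπ s') - ∑ s', Phat p.2 a s' * Vhatπ s')|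
            ≤ |(1 - γ) * (rhat p.1 a - rhat p.2 a)|
              + |γ * ((∑ s', Phat p.1 a s' * Vhatπ s') - ∑ s', Phat p.2 a s' * Vhatπ s')| :=
              abs_add_le _ _
          _ = (1 - γ) * |rhat p.1 a - rhat p.2 a|
              + γ * |(∑ s', Phat p.1 a s' * Vhatπ s') - ∑ s', Phat p.2 a s' * Vhatπ s'| := by
              rw [abs_mul, abs_mul, abs_of_nonneg h1γ.le, abs_of_nonneg hγ0.le]
          _ ≤ (1 - γ) * (Lr * dist p.1 p.2) + γ * (K * (LP * dist p.1 p.2)) :=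
              add_le_add (mul_le_mul_of_nonneg_left (hLr p.1 p.2 a) h1γ.le)
                (mul_le_mul_of_nonneg_left hterm hγ0.le)
      have hsup : |Vhatπ p.1 - Vhatπ p.2|
          ≤ (1 - γ) * (Lr * dist p.1 p.2) + γ * (K * (LP * dist p.1 p.2)) := by
        rw [hVhatopt p.1, hVhatopt p.2]
        exact abs_ciSup_sub_ciSup_le _ _ _ hQ
      have hKineq : K ≤ (1 - γ) * Lr + γ * (K * LP) := by
        rw [← hKd] at hsup
        have : K * dist p.1 p.2 ≤ ((1 - γ) * Lr + γ * (K * LP)) * dist p.1 p.2 := by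
          refine hsup.trans (le_of_eq ?_); ring
        exact le_of_mul_le_mul_right this hd
      rw [hLVdef, le_div_iff₀ h1γLP]
      nlinarith [hKineq]
  -- generic cross-model Q bound
  have Qbound : ∀ (W : S → ℝ) (D : ℝ), (∀ s', |Vhatπ s' - W s'| ≤ D) → ∀ (t : S) (a : A),
      |((1 - γ) * rhat t a + γ * ∑ s', Phat t a s' * Vhatπ s')
        - ((1 - γ) * r t a + γ * ∑ s', P t a s' * W s')|
      ≤ (1 - γ) * ε + γ * (K * δ + D) := by
    intro W D hD t a
    have e1 : ((1 - γ) * rhat t a + γ * ∑ s', Phat t a s' * Vhatπ s')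
        - ((1 - γ) * r t a + γ * ∑ s', P t a s' * W s')
        = (1 - γ) * (rhat t a - r t a)
          + γ * ((∑ s', Phat t a s' * Vhatπ s') - ∑ s', P t a s' * W s') := by ring
    rw [e1]
    have hr : |rhat t a - r t a| ≤ ε := by rw [abs_sub_comm]; exact hε t a
    have hterm : |(∑ s', Phat t a s' * Vhatπ s') - ∑ s', P t a s' * W s'| ≤ K * δ + D := by
      have h := exp_diff_le (P t a) (Phat t a) Vhatπ W (hP0 t a) (hP1 t a) (hPhat1 t a)
        K hK0 hKlip D hD
      refine h.trans (add_le_add_left ?_ D)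
      exact mul_le_mul_of_nonneg_left (hδ t a) hK0
    calc |(1 - γ) * (rhat t a - r t a)
          + γ * ((∑ s', Phat t a s' * Vhatπ s') - ∑ s', P t a s' * W s')|
        ≤ |(1 - γ) * (rhat t a - r t a)|
          + |γ * ((∑ s', Phat t a s' * Vhatπ s') - ∑ s', P t a s' * W s')| := abs_add_le _ _
      _ = (1 - γ) * |rhat t a - r t a|
          + γ * |(∑ s', Phat t a s' * Vhatπ s') - ∑ s', P t a s' * W s'| := by
          rw [abs_mul, abs_mul, abs_of_nonneg h1γ.le, abs_of_nonneg hγ0.le]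
      _ ≤ (1 - γ) * ε + γ * (K * δ + D) :=
          add_le_add (mul_le_mul_of_nonneg_left hr h1γ.le)
            (mul_le_mul_of_nonneg_left hterm hγ0.le)
  have hJK : γ * (K * δ) ≤ (1 - γ) * J := by
    have h := mul_le_mul_of_nonneg_left hKle (mul_nonneg hγ0.le hδ0 : (0:ℝ) ≤ γ * δ)
    calc γ * (K * δ) = γ * δ * K := by ring
      _ ≤ γ * δ * LV := h
      _ = (1 - γ) * J := by rw [hLVdef, hJdef]; ring
  -- Step 2: bound |Vhatπ - Vπ| by ε + J
  have hD1 : ∀ s, |Vhatπ s - Vπ s| ≤ ε + J := by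
    obtain ⟨t, ht0⟩ := Finite.exists_max (fun s => |Vhatπ s - Vπ s|)
    obtain ⟨D1, hD1def⟩ : ∃ D : ℝ, D = |Vhatπ t - Vπ t| := ⟨_, rfl⟩
    have ht : ∀ s, |Vhatπ s - Vπ s| ≤ D1 := by rw [hD1def]; exact ht0
    have habs : |Vhatπ t - Vπ t| ≤ (1 - γ) * ε + γ * (K * δ + D1) := by
      have e : Vhatπ t - Vπ t = ∑ a, πhat t a *
          (((1 - γ) * rhat t a + γ * ∑ s', Phat t a s' * Vhatπ s')
            - ((1 - γ) * r t a + γ * ∑ s', P t a s' * Vπ s')) := by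
        rw [hVhatπ t, hVπ t, ← Finset.sum_sub_distrib]
        exact Finset.sum_congr rfl fun a _ => (mul_sub _ _ _).symm
      rw [e]
      calc |∑ a, πhat t a * (((1 - γ) * rhat t a + γ * ∑ s', Phat t a s' * Vhatπ s')
              - ((1 - γ) * r t a + γ * ∑ s', P t a s' * Vπ s'))|
          ≤ ∑ a, |πhat t a * (((1 - γ) * rhat t a + γ * ∑ s', Phat t a s' * Vhatπ s')
              - ((1 - γ) * r t a + γ * ∑ s', P t a s' * Vπ s'))| :=
            Finset.abs_sum_le_sum_abs _ _
        _ ≤ ∑ a, πhat t a * ((1 - γ) * ε + γ * (K * δ + D1)) := by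
            apply Finset.sum_le_sum
            intro a _
            rw [abs_mul, abs_of_nonneg (hπ0 t a)]
            exact mul_le_mul_of_nonneg_left (Qbound Vπ D1 ht t a) (hπ0 t a)
        _ = (1 - γ) * ε + γ * (K * δ + D1) := by rw [← Finset.sum_mul, hπ1 t, one_mul]
    have hstep : D1 ≤ (1 - γ) * ε + γ * (K * δ + D1) := hD1def.trans_le habs
    have h' : D1 ≤ ε + J := by nlinarith [hstep, hJK]
    intro s
    exact (ht s).trans h'
  -- Step 3: bound |Vhatπ - Vstar| by ε + J
  have hD2 : ∀ s, |Vhatπ s - Vstar s| ≤ ε + J := by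
    obtain ⟨u, hu0⟩ := Finite.exists_max (fun s => |Vhatπ s - Vstar s|)
    obtain ⟨D2, hD2def⟩ : ∃ D : ℝ, D = |Vhatπ u - Vstar u| := ⟨_, rfl⟩
    have hu : ∀ s, |Vhatπ s - Vstar s| ≤ D2 := by rw [hD2def]; exact hu0
    have habs : |Vhatπ u - Vstar u| ≤ (1 - γ) * ε + γ * (K * δ + D2) := by
      rw [hVhatopt u, hVstar u]
      exact abs_ciSup_sub_ciSup_le _ _ _ (fun a => Qbound Vstar D2 hu u a)
    have hstep : D2 ≤ (1 - γ) * ε + γ * (K * δ + D2) := hD2def.trans_le habs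
    have h' : D2 ≤ ε + J := by nlinarith [hstep, hJK]
    intro s
    exact (hu s).trans h'
  -- Step 4: conclude
  intro s
  have h1 := abs_le.mp (hD1 s)
  have h2 := abs_le.mp (hD2 s)
  rw [ge_iff_le]
  linarith [h1.1, h1.2, h2.1, h2.2]
end
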